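/- For every n ≥ 1, the number of pairs (σ,α) of permutations of {1,...,n} generating a transitive subgroup of S_n equals (n−1)! · c_{n+1}, where c_{n+1} is the number of indecomposable permutations of S_{n+1}. -/

import Mathlib

/-!
Both sides satisfy the same triangular recurrence. Sorting the pairs `(σ, α)` on `Fin n` by the
orbit `S ∋ 0` of `⟨σ, α⟩`, the fiber over `S` is a transitive pair on `S` times an arbitrary pair on
its complement, so `(n!)² = ∑ₖ C(n-1, k-1) Tₖ ((n-k)!)²`, where `Tₖ` counts the transitive pairs on
`k` points. Sorting permutations by the length of their first indecomposable block gives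
`n! = ∑ₖ cₖ (n-k)!`; applied at `n + 1`, this shows that `(k-1)! c_{k+1}` satisfies
the same recurrence as `Tₖ`, whose top coefficient is `1`.
-/

/-- A pair of permutations of `{0,...,n-1}` is transitive (a labeled hypermap)
if the subgroup it generates acts transitively. -/
def IsTransitivePair {n : ℕ} (σ α : Equiv.Perm (Fin n)) : Prop :=
  ∀ x y : Fin n, ∃ g ∈ Subgroup.closure ({σ, α} : Set (Equiv.Perm (Fin n))), g x = y

/-- A permutation of `{0,...,m-1}` is indecomposable if it fixes no proper
initial segment `{0,...,p-1}` (for `1 ≤ p < m`) setwise. -/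
def Indecomposable {m : ℕ} (α : Equiv.Perm (Fin m)) : Prop :=
  ∀ p : ℕ, 1 ≤ p → p < m → ∃ i : Fin m, (i : ℕ) < p ∧ p ≤ ((α i : ℕ))

/-- `numIndec m` is the number of indecomposable permutations of `S_m`. -/
noncomputable def numIndec (m : ℕ) : ℕ :=
  Nat.card {α : Equiv.Perm (Fin m) // Indecomposable α}

open Equiv Finset MulAction
open scoped Nat

lemma Nat.card_subtype_comp_of_injective {α β : Type*} {f : α → β} (hf : Function.Injective f)
    {Q : β → Prop} (hQ : ∀ b, Q b → b ∈ Set.range f) :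
    Nat.card {a // Q (f a)} = Nat.card {b // Q b} :=
  Nat.card_congr <| Equiv.ofBijective (fun a => ⟨f a, a.2⟩)
    ⟨fun _ _ h => Subtype.ext (hf (congrArg Subtype.val h)),
     fun ⟨b, hb⟩ => let ⟨a, ha⟩ := hQ b hb; ⟨⟨a, ha ▸ hb⟩, Subtype.ext ha⟩⟩

def Equiv.prodProdSubtypeFstFstEquiv (α β : Type*) (Q : α × α → Prop) :
    {B : (α × β) × (α × β) // Q (B.1.1, B.2.1)} ≃ {T : α × α // Q T} × (β × β) :=
  ((prodProdProdComm α β α β).subtypeEquiv (q := fun T => Q T.1) fun _ => Iff.rfl).trans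
    prodSubtypeFstEquivSubtypeProd

lemma eq_of_forall_sum_range_succ_smul_eq {M : Type*} [AddCancelCommMonoid M] {a : ℕ → ℕ → ℕ}
    (ha : ∀ m, a m m = 1) {x y : ℕ → M}
    (h : ∀ m, ∑ j ∈ range (m + 1), a m j • x j = ∑ j ∈ range (m + 1), a m j • y j) : x = y := by
  funext m
  induction m using Nat.strong_induction_on with
  | _ m ih =>
    have hm := h m
    rw [sum_range_succ, sum_range_succ, ha, one_smul, one_smul,
      sum_congr rfl fun j hj => by rw [ih j (mem_range.1 hj)]] at hm
    exact add_left_cancel hm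

lemma Subgroup.closure_pair_map {G H : Type*} [Group G] [Group H] (f : G →* H) (a b : G) :
    Subgroup.closure {f a, f b} = (Subgroup.closure {a, b}).map f := by
  rw [MonoidHom.map_closure, Set.image_pair]

namespace Equiv.Perm

variable {X : Type*} {p : X → Prop} [DecidablePred p]

lemma mem_range_subtypeCongrHom_iff {f : Perm X} :
    f ∈ (subtypeCongrHom p).range ↔ ∀ x, p (f x) ↔ p x := by
  constructor
  · rintro ⟨⟨g, h⟩, rfl⟩ x
    by_cases hx : p x
    · simp [subtypeCongr.left_apply (h := hx), hx, (g ⟨x, hx⟩).2]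
    · simp [subtypeCongr.right_apply (h := hx), hx, (h ⟨x, hx⟩).2]
  · intro hf
    refine ⟨(f.subtypePerm hf, f.subtypePerm fun x => not_congr (hf x)), ?_⟩
    ext x
    by_cases hx : p x
    · simp [subtypeCongr.left_apply (h := hx)]
    · simp [subtypeCongr.right_apply (h := hx)]

lemma mem_range_subtypeCongrHom_of_mapsTo [Finite X] {f : Perm X} (hf : ∀ x, p x → p (f x)) :
    f ∈ (subtypeCongrHom p).range :=
  mem_range_subtypeCongrHom_iff.mpr fun x =>
    ⟨fun h => by simpa using perm_symm_on_of_perm_on_finite hf h, hf x⟩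

end Equiv.Perm

section TransitivePairs

variable {X Y : Type*}

lemma isPretransitive_closure_pair_iff (σ α : Perm X) :
    IsPretransitive (Subgroup.closure {σ, α}) X ↔ ∀ x y, ∃ g ∈ Subgroup.closure {σ, α}, g x = y :=
  ⟨fun _ x y => let ⟨g, hg⟩ := exists_smul_eq (Subgroup.closure {σ, α}) x y; ⟨g, g.2, hg⟩,
   fun h => ⟨fun x y => let ⟨g, hg, hgxy⟩ := h x y; ⟨⟨g, hg⟩, hgxy⟩⟩⟩

lemma isPretransitive_closure_pair_permCongr (e : X ≃ Y) (σ α : Perm X) :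
    IsPretransitive (Subgroup.closure {e.permCongr σ, e.permCongr α}) Y ↔
      IsPretransitive (Subgroup.closure {σ, α}) X := by
  have hmap : Subgroup.closure {e.permCongr σ, e.permCongr α} =
      (Subgroup.closure {σ, α}).map (e.permCongrHom : Perm X →* Perm Y) := by
    rw [MonoidHom.map_closure, Set.image_pair]; rfl
  rw [isPretransitive_closure_pair_iff, isPretransitive_closure_pair_iff, hmap]
  constructor
  · intro h x y
    obtain ⟨_, ⟨g, hg, rfl⟩, hgxy⟩ := h (e x) (e y)
    exact ⟨g, hg, e.injective (by simpa using hgxy)⟩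
  · intro h x y
    obtain ⟨g, hg, hgxy⟩ := h (e.symm x) (e.symm y)
    exact ⟨_, ⟨g, hg, rfl⟩, by simp [hgxy]⟩

noncomputable def numTransitive (n : ℕ) : ℕ :=
  Nat.card {P : Perm (Fin n) × Perm (Fin n) // IsTransitivePair P.1 P.2}

lemma card_isPretransitive_closure_pair [Fintype X] :
    Nat.card {P : Perm X × Perm X // IsPretransitive (Subgroup.closure {P.1, P.2}) X} =
      numTransitive (Fintype.card X) :=
  Nat.card_congr <| (permCongr (Fintype.equivFin X)).prodCongr (permCongr (Fintype.equivFin X))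
    |>.subtypeEquiv fun P =>
      (isPretransitive_closure_pair_permCongr _ P.1 P.2).symm.trans
        (isPretransitive_closure_pair_iff _ _)

variable {p : X → Prop} [DecidablePred p]

lemma orbit_closure_pair_subtypeCongrHom (b₁ b₂ : Perm {x // p x} × Perm {x // ¬p x})
    (x : {x // p x}) :
    orbit (Subgroup.closure {Perm.subtypeCongrHom p b₁, Perm.subtypeCongrHom p b₂}) (x : X) =
      Subtype.val '' orbit (Subgroup.closure {b₁.1, b₂.1}) x := by
  rw [Subgroup.closure_pair_map, show b₁.1 = MonoidHom.fst _ _ b₁ from rfl,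
    show b₂.1 = MonoidHom.fst _ _ b₂ from rfl, Subgroup.closure_pair_map]
  ext y
  simp [mem_orbit_iff, Subgroup.smul_def, Perm.smul_def]

lemma orbit_closure_pair_subtypeCongrHom_eq_iff (b₁ b₂ : Perm {x // p x} × Perm {x // ¬p x})
    {x : X} (hx : p x) :
    orbit (Subgroup.closure {Perm.subtypeCongrHom p b₁, Perm.subtypeCongrHom p b₂}) x = {y | p y} ↔
      IsPretransitive (Subgroup.closure {b₁.1, b₂.1}) {x // p x} := by
  rw [orbit_closure_pair_subtypeCongrHom b₁ b₂ ⟨x, hx⟩, isPretransitive_iff_orbit_eq_univ ⟨x, hx⟩,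
    ← Subtype.range_coe_subtype, ← Set.image_univ,
    (Set.image_injective.2 Subtype.val_injective).eq_iff]

lemma card_perm_pairs_orbit_eq [Fintype X] [DecidableEq X] {x₀ : X} {S : Finset X} (hx₀ : x₀ ∈ S) :
    Nat.card {P : Perm X × Perm X // orbit (Subgroup.closure {P.1, P.2}) x₀ = S} =
      numTransitive #S * (Fintype.card X - #S)! ^ 2 := by
  have hinj := Perm.subtypeCongrHom_injective (· ∈ S)
  have hrange (P : Perm X × Perm X) (hP : orbit (Subgroup.closure {P.1, P.2}) x₀ = S) :
      P ∈ Set.range (Prod.map (Perm.subtypeCongrHom (· ∈ S)) (Perm.subtypeCongrHom (· ∈ S))) := by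
    have hmaps {g} (hg : g ∈ Subgroup.closure {P.1, P.2}) (x : X) (hx : x ∈ S) : g x ∈ S := by
      rw [← Finset.mem_coe, ← hP] at hx ⊢
      exact mem_orbit_of_mem_orbit (⟨g, hg⟩ : Subgroup.closure {P.1, P.2}) hx
    obtain ⟨b₁, hb₁⟩ := Perm.mem_range_subtypeCongrHom_of_mapsTo
      (hmaps (Subgroup.subset_closure (Set.mem_insert P.1 _)))
    obtain ⟨b₂, hb₂⟩ := Perm.mem_range_subtypeCongrHom_of_mapsTo
      (hmaps (Subgroup.subset_closure (Set.mem_insert_of_mem P.1 rfl)))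
    exact ⟨(b₁, b₂), Prod.ext hb₁ hb₂⟩
  rw [← Nat.card_subtype_comp_of_injective (hinj.prodMap hinj) hrange]
  simp only [Prod.map_fst, Prod.map_snd]
  let e₁ := subtypeEquivRight fun B : (Perm S × Perm {x // x ∉ S}) × (Perm S × Perm {x // x ∉ S}) =>
    orbit_closure_pair_subtypeCongrHom_eq_iff (p := fun x => x ∈ S) B.1 B.2 hx₀
  let e₂ := prodProdSubtypeFstFstEquiv (Perm S) (Perm {x // x ∉ S})
    fun T => IsPretransitive (Subgroup.closure {T.1, T.2}) S
  refine (Nat.card_congr (e₁.trans e₂)).trans ?_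
  rw [Nat.card_prod, card_isPretransitive_closure_pair, Nat.card_prod, Nat.card_perm, sq,
    Nat.card_eq_fintype_card, Fintype.card_subtype_compl, Fintype.card_coe]

end TransitivePairs

lemma sq_factorial_eq_sum_numTransitive (n : ℕ) :
    (n + 1)! ^ 2 = ∑ j ∈ range (n + 1), n.choose j * (n - j)! ^ 2 * numTransitive (j + 1) := by
  let orbitFinset (P : Perm (Fin (n + 1)) × Perm (Fin (n + 1))) : Finset (Fin (n + 1)) :=
    (Set.toFinite (orbit (Subgroup.closure {P.1, P.2}) 0)).toFinset
  have hmem (P) : 0 ∈ orbitFinset P := by simp [orbitFinset]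
  have hfiber (T) (hT : T ∈ (univ.erase (0 : Fin (n + 1))).powerset) :
      #{P | (orbitFinset P).erase 0 = T} = (n - #T)! ^ 2 * numTransitive (#T + 1) := by
    have h0T : 0 ∉ T := fun h => by simpa using mem_powerset.1 hT h
    have hiff (P) : (orbitFinset P).erase 0 = T ↔
        orbit (Subgroup.closure {P.1, P.2}) (0 : Fin (n + 1)) = ↑(insert 0 T) := by
      rw [← Set.Finite.coe_toFinset (Set.toFinite (orbit _ _)), Finset.coe_inj]
      exact ⟨fun h => h ▸ (insert_erase (hmem P)).symm,
        fun h => by simp only [orbitFinset, h, erase_insert h0T]⟩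
    rw [← Fintype.card_subtype, ← Nat.card_eq_fintype_card, Nat.card_congr (subtypeEquivRight hiff),
      card_perm_pairs_orbit_eq (mem_insert_self 0 T), card_insert_of_notMem h0T, Fintype.card_fin,
      Nat.add_sub_add_right, mul_comm]
  calc (n + 1)! ^ 2 = #(univ : Finset (Perm (Fin (n + 1)) × Perm (Fin (n + 1)))) := by
        simp [sq, Fintype.card_perm]
    _ = ∑ T ∈ (univ.erase 0).powerset, #{P | (orbitFinset P).erase 0 = T} :=
        card_eq_sum_card_fiberwise fun P _ => mem_powerset.2 (erase_subset_erase _ (subset_univ _))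
    _ = ∑ T ∈ (univ.erase 0).powerset, (n - #T)! ^ 2 * numTransitive (#T + 1) :=
        sum_congr rfl hfiber
    _ = _ := by
        rw [sum_powerset_apply_card fun j => (n - j)! ^ 2 * numTransitive (j + 1),
          card_erase_of_mem (mem_univ _), card_univ, Fintype.card_fin, Nat.add_sub_cancel]
        simp only [smul_eq_mul, mul_assoc]

section FirstBlock

variable {m : ℕ}

def FixesPrefix (α : Perm (Fin m)) (q : ℕ) : Prop :=
  ∀ i : Fin m, (i : ℕ) < q → (α i : ℕ) < q

lemma indecomposable_iff_forall_not_fixesPrefix (α : Perm (Fin (m + 1))) :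
    Indecomposable α ↔ ∀ k < m, ¬ FixesPrefix α (k + 1) := by
  simp only [Indecomposable, FixesPrefix, not_forall, not_lt, exists_prop]
  constructor
  · exact fun h k hk => h (k + 1) (by omega) (by omega)
  · intro h q hq₁ hqm
    obtain ⟨k, rfl⟩ := Nat.exists_eq_add_of_le' hq₁
    exact h k (by omega)

lemma fixesPrefix_subtypeCongr_iff {n q : ℕ} (hq : q ≤ n) (e : {i : Fin m // (i : ℕ) < n} ≃ Fin n)
    (he : ∀ i, (e i : ℕ) = i) (β : Perm {i : Fin m // (i : ℕ) < n})
    (γ : Perm {i : Fin m // ¬(i : ℕ) < n}) :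
    FixesPrefix (β.subtypeCongr γ) q ↔ FixesPrefix (e.permCongr β) q := by
  have he' (j : Fin n) : ((e.symm j : Fin m) : ℕ) = j := by rw [← he, apply_symm_apply]
  constructor
  · intro h j hj
    simpa [Perm.subtypeCongr.left_apply_subtype, he] using h (e.symm j) (by rwa [he'])
  · intro h i hi
    have hin : (i : ℕ) < n := by omega
    rw [show i = (⟨i, hin⟩ : {i : Fin m // (i : ℕ) < n}) from rfl,
      Perm.subtypeCongr.left_apply_subtype]
    simpa [he] using h (e ⟨i, hin⟩) (by rwa [he])

instance (α : Perm (Fin m)) (q : ℕ) : Decidable (FixesPrefix α q) :=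
  by unfold FixesPrefix; infer_instance

lemma exists_fixesPrefix_succ (α : Perm (Fin (m + 1))) : ∃ j, FixesPrefix α (j + 1) :=
  ⟨m, fun i _ => (α i).isLt⟩

/-- `firstBlock α + 1` is the length of the first indecomposable block of `α`. -/
def firstBlock (α : Perm (Fin (m + 1))) : ℕ :=
  Nat.find (exists_fixesPrefix_succ α)

lemma firstBlock_lt (α : Perm (Fin (m + 1))) : firstBlock α < m + 1 :=
  Nat.lt_succ_of_le (Nat.find_min' _ (fun i _ => (α i).isLt : FixesPrefix α (m + 1)))

lemma card_firstBlock_eq {j : ℕ} (hj : j ≤ m) :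
    Nat.card {α : Perm (Fin (m + 1)) // firstBlock α = j} = numIndec (j + 1) * (m - j)! := by
  let p : Fin (m + 1) → Prop := fun i => (i : ℕ) < j + 1
  let e : {i // p i} ≃ Fin (j + 1) := (Fin.castLEOrderIso (by omega)).symm.toEquiv
  have hinj := Perm.subtypeCongrHom_injective p
  have hrange (α) (hα : firstBlock α = j) : α ∈ Set.range (Perm.subtypeCongrHom p) := by
    have hfix : FixesPrefix α (firstBlock α + 1) := Nat.find_spec (exists_fixesPrefix_succ α)
    rw [hα] at hfix
    exact Perm.mem_range_subtypeCongrHom_of_mapsTo hfix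
  have key (b : Perm {i // p i} × Perm {i // ¬p i}) :
      firstBlock (Perm.subtypeCongrHom p b) = j ↔ Indecomposable (e.permCongr b.1) := by
    have hfix (k : ℕ) (hk : k ≤ j) :=
      fixesPrefix_subtypeCongr_iff (q := k + 1) (by omega) e (fun _ => rfl) b.1 b.2
    have htop : FixesPrefix (e.permCongr b.1) (j + 1) := fun i _ => (e.permCongr b.1 i).isLt
    rw [firstBlock, Nat.find_eq_iff, indecomposable_iff_forall_not_fixesPrefix,
      Perm.subtypeCongrHom_apply, hfix j le_rfl, and_iff_right htop]
    exact forall₂_congr fun k hk => (hfix k hk.le).not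
  rw [← Nat.card_subtype_comp_of_injective hinj hrange,
    Nat.card_congr ((subtypeEquivRight key).trans
      (prodSubtypeFstEquivSubtypeProd (p := fun β => Indecomposable (e.permCongr β)))),
    Nat.card_prod,
    Nat.card_congr (e.permCongr.subtypeEquiv fun _ => Iff.rfl), Nat.card_perm]
  congr 2
  rw [Nat.card_eq_fintype_card, Fintype.card_subtype_compl, Fintype.card_fin,
    Fintype.card_fin_lt_of_le (by omega), Nat.add_sub_add_right]

end FirstBlock

lemma factorial_succ_eq_sum_numIndec (m : ℕ) :
    (m + 1)! = ∑ j ∈ range (m + 1), numIndec (j + 1) * (m - j)! := by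
  calc (m + 1)! = #(univ : Finset (Perm (Fin (m + 1)))) := by simp [Fintype.card_perm]
    _ = ∑ j ∈ range (m + 1), #{α | firstBlock α = j} :=
        card_eq_sum_card_fiberwise fun α _ => mem_range.2 (firstBlock_lt α)
    _ = _ := sum_congr rfl fun j hj => by
        rw [← Fintype.card_subtype, ← Nat.card_eq_fintype_card,
          card_firstBlock_eq (Nat.lt_succ_iff.1 (mem_range.1 hj))]

lemma sum_choose_mul_factorial_mul_numIndec (m : ℕ) :
    ∑ j ∈ range (m + 1), m.choose j * (m - j)! ^ 2 * (j ! * numIndec (j + 2)) = (m + 1)! ^ 2 := by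
  have hrec := factorial_succ_eq_sum_numIndec (m + 1)
  have hone : numIndec 1 = 1 := by simpa using (factorial_succ_eq_sum_numIndec 0).symm
  simp only [sum_range_succ' _ (m + 1), hone, Nat.add_sub_add_right, Nat.sub_zero, one_mul,
    add_assoc, Nat.reduceAdd] at hrec
  have hsum : ∑ j ∈ range (m + 1), numIndec (j + 2) * (m - j)! = (m + 1) * (m + 1)! := by
    rw [Nat.factorial_succ (m + 1)] at hrec
    linarith
  calc ∑ j ∈ range (m + 1), m.choose j * (m - j)! ^ 2 * (j ! * numIndec (j + 2))
      = ∑ j ∈ range (m + 1), m ! * (numIndec (j + 2) * (m - j)!) := sum_congr rfl fun j hj => by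
        rw [← Nat.choose_mul_factorial_mul_factorial (Nat.lt_succ_iff.1 (mem_range.1 hj))]
        ring
    _ = (m + 1)! ^ 2 := by rw [← mul_sum, hsum, Nat.factorial_succ m]; ring

lemma numTransitive_succ (m : ℕ) : numTransitive (m + 1) = m ! * numIndec (m + 2) := by
  have h := eq_of_forall_sum_range_succ_smul_eq (a := fun m j => m.choose j * (m - j)! ^ 2)
    (x := fun j => numTransitive (j + 1)) (y := fun j => j ! * numIndec (j + 2)) (by simp)
    fun m => by
      simp only [smul_eq_mul]
      rw [← sq_factorial_eq_sum_numTransitive, sum_choose_mul_factorial_mul_numIndec]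
  exact congrFun h m

theorem labeled_hypermaps_eq_factorial_mul_indec (n : ℕ) (hn : 1 ≤ n) :
    Nat.card {P : Equiv.Perm (Fin n) × Equiv.Perm (Fin n) // IsTransitivePair P.1 P.2} =
      Nat.factorial (n - 1) * numIndec (n + 1) := by
  obtain ⟨m, rfl⟩ := Nat.exists_eq_add_of_le' hn
  exact numTransitive_succ m
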